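/- Intervention propagation bound: in a DAG G on Fin n with value assignment determined by sources and local functions (as in the unique-assignment lemma), if we change the value only at node i (replacing a i or overriding v i), then the resulting unique assignment can differ from the original only at i and at nodes reachable from i by a directed path. -/
import Mathlib


/-- An intervention at node `i` can change values only at `i` and its
descendants (nodes reachable from `i` along edges). -/
theorem intervention_propagation (n : ℕ) (α : Type*)
    (E : Fin n → Fin n → Prop)
    (hirr : ∀ i, ¬ E i i)
    (hacyc : ¬ ∃ (k : ℕ) (v : ℕ → Fin n), 1 ≤ k ∧ v 0 = v k ∧
        ∀ t < k, E (v t) (v (t + 1)))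
    (a : Fin n → α)
    (F : Fin n → (Fin n → α) → α)
    (hF : ∀ j u u', (∀ p, E p j → u p = u' p) → F j u = F j u')
    (v : Fin n → α)
    (hv : ∀ j, ((∀ p, ¬ E p j) → v j = a j) ∧ ((∃ p, E p j) → v j = F j v))
    (i : Fin n) (b : α) (w : Fin n → α)
    (hwi : w i = b)
    (hw : ∀ j, j ≠ i →
      ((∀ p, ¬ E p j) → w j = a j) ∧ ((∃ p, E p j) → w j = F j w)) :
    ∀ j, w j ≠ v j → Relation.ReflTransGen E i j := by
  have hpath : ∀ x y, Relation.TransGen E x y → ∃ k, ∃ f : ℕ → Fin n,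
      1 ≤ k ∧ f 0 = x ∧ f k = y ∧ ∀ t < k, E (f t) (f (t + 1)) := by
    intro x y h
    induction h with
    | @single c h =>
      refine ⟨1, fun t => if t = 0 then x else c, le_refl 1, by simp, by simp, ?_⟩
      intro t ht
      interval_cases t
      simpa using h
    | @tail c d hab hbc ih =>
      obtain ⟨k, f, hk, h0, hkend, hstep⟩ := ih
      refine ⟨k + 1, fun t => if t ≤ k then f t else d, by omega,
        by simp [h0], by simp, ?_⟩
      intro t ht
      rcases Nat.lt_or_ge t k with h' | h'
      · simp only [if_pos (by omega : t ≤ k), if_pos (by omega : t + 1 ≤ k)]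
        exact hstep t h'
      · have htk : t = k := by omega
        simp only [htk, if_pos (le_refl k), if_neg (by omega : ¬ k + 1 ≤ k), hkend]
        exact hbc
  have hirr' : ∀ x, ¬ Relation.TransGen E x x := by
    intro x hx
    obtain ⟨k, f, hk, h0, hkend, hstep⟩ := hpath x x hx
    exact hacyc ⟨k, f, hk, by rw [h0, hkend], hstep⟩
  haveI : IsIrrefl (Fin n) (Relation.TransGen E) := ⟨hirr'⟩
  haveI : IsTrans (Fin n) (Relation.TransGen E) := ⟨fun _ _ _ => Relation.TransGen.trans⟩
  have hwf : WellFounded (Relation.TransGen E) :=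
    Finite.wellFounded_of_trans_of_irrefl _
  have key : ∀ j, ¬ Relation.ReflTransGen E i j → w j = v j := by
    intro j
    induction j using hwf.induction with
    | _ j ih =>
      intro hnr
      have hji : j ≠ i := by rintro rfl; exact hnr Relation.ReflTransGen.refl
      by_cases hp : ∃ p, E p j
      · rw [(hw j hji).2 hp, (hv j).2 hp]
        apply hF
        intro p hpj
        apply ih p (Relation.TransGen.single hpj)
        intro hip
        exact hnr (hip.tail hpj)
      · push_neg at hp
        rw [(hw j hji).1 hp, (hv j).1 hp]
  intro j hj
  by_contra h
  exact hj (key j h)
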